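/- arXiv:2109.09101 — 5 statements merged into one kernel-verified Lean document; each statement's English description precedes it below -/
import Mathlib

section
/- (Theorem 2, first part.) Consider a monoatomic chain with N ≥ 1 mobile atoms and fixed ends whose force function F : ℝ → ℝ is Lipschitz: functions x_0, …, x_{N+1} : ℝ → ℝ with x_0 ≡ 0, x_{N+1} ≡ 0, each x_n twice differentiable, satisfying x_n''(t) = F(x_{n+1}(t) − x_n(t)) − F(x_n(t) − x_{n−1}(t)) for 1 ≤ n ≤ N and all t. Suppose the initial data possess inversion structure: x_n(0) = −x_{N+1−n}(0) and x_n'(0) = −x_{N+1−n}'(0) for all 1 ≤ n ≤ N. Then the inversion structure is conserved for all time: x_n(t) = −x_{N+1−n}(t) for all 1 ≤ n ≤ N and all t ∈ ℝ. In particular, any inversion mode exists for an infinitely long time without transferring excitation to permutation modes. -/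
/-!
Under the inversion `x_n ↦ -x_{N+1-n}` the two bonds of atom `n` are carried onto the two bonds
of its conjugate with their roles exchanged, so Newton's equations are invariant and the
inverted motion is again a motion of the chain. Written as a first-order system for positions and
velocities, the vector field is Lipschitz because `F` is, so solutions are determined by their
initial data; an initial state fixed by the inversion therefore stays fixed.
-/

theorem ODE_solution_map_eq_self {E : Type*} [NormedAddCommGroup E] [NormedSpace ℝ E]
    {v : E → E} {K : NNReal} (hv : LipschitzWith K v) (σ : E →L[ℝ] E) (hσ : ∀ u, v (σ u) = σ (v u))
    {f : ℝ → E} (hf : ∀ t, HasDerivAt f (v (f t)) t) {t₀ : ℝ} (h₀ : σ (f t₀) = f t₀) (t : ℝ) :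
    σ (f t) = f t := by
  have hσf : ∀ t, HasDerivAt (σ ∘ f) (v ((σ ∘ f) t)) t := fun t => by
    simpa only [Function.comp_apply, hσ] using σ.hasFDerivAt.comp_hasDerivAt t (hf t)
  exact congrFun (ODE_solution_unique_univ (v := fun _ => v) (s := fun _ => Set.univ)
    (fun _ => hv.lipschitzOnWith) (fun t => ⟨hσf t, trivial⟩) (fun t => ⟨hf t, trivial⟩) h₀) t

theorem LipschitzWith.pi {ι α : Type*} [Fintype ι] [PseudoEMetricSpace α]
    {β : ι → Type*} [∀ i, PseudoEMetricSpace (β i)] {f : α → ∀ i, β i} {K : NNReal}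
    (hf : ∀ i, LipschitzWith K fun a => f a i) : LipschitzWith K f :=
  fun a b => edist_pi_le_iff.2 fun i => hf i a b

namespace MonoatomicChain

variable (N : ℕ)

/-- Atom `k` of the chain, for `p i` the position of atom `i + 1`; the fixed ends `0` and
`N + 1` read as `0`. -/
def extend (p : Fin N → ℝ) (k : ℕ) : ℝ :=
  if h : 1 ≤ k ∧ k ≤ N then p ⟨k - 1, by omega⟩ else 0

def force (F : ℝ → ℝ) (p : Fin N → ℝ) : Fin N → ℝ := fun i =>
  F (extend N p (i + 2) - extend N p (i + 1)) - F (extend N p (i + 1) - extend N p i)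

def field (F : ℝ → ℝ) (u : (Fin N → ℝ) × (Fin N → ℝ)) : (Fin N → ℝ) × (Fin N → ℝ) :=
  (u.2, force N F u.1)

def reverse : (Fin N → ℝ) →L[ℝ] (Fin N → ℝ) :=
  ContinuousLinearMap.pi fun i => ContinuousLinearMap.proj i.rev

def inversion : (Fin N → ℝ) × (Fin N → ℝ) →L[ℝ] (Fin N → ℝ) × (Fin N → ℝ) :=
  -(reverse N).prodMap (reverse N)

noncomputable def state (x : ℕ → ℝ → ℝ) (t : ℝ) : (Fin N → ℝ) × (Fin N → ℝ) :=
  (fun i => x (i + 1) t, fun i => deriv (x (i + 1)) t)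

variable {N}

theorem lipschitzWith_extend (k : ℕ) : LipschitzWith 1 fun p => extend N p k := by
  unfold extend
  split_ifs
  · exact LipschitzWith.eval _
  · exact LipschitzWith.const' 0

theorem _root_.LipschitzWith.monoatomicChain_force {F : ℝ → ℝ} {K : NNReal}
    (hF : LipschitzWith K F) : LipschitzWith (4 * K) (force N F) := by
  refine LipschitzWith.pi fun i => ?_
  have hbond (a b : ℕ) : LipschitzWith (K * 2) fun p => F (extend N p a - extend N p b) := by
    have := hF.comp ((lipschitzWith_extend (N := N) a).sub (lipschitzWith_extend b))
    rwa [one_add_one_eq_two] at this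
  have h := (hbond (i + 2) (i + 1)).sub (hbond (i + 1) i)
  rw [show 4 * K = K * 2 + K * 2 by ring]
  exact h

theorem _root_.LipschitzWith.monoatomicChain_field {F : ℝ → ℝ} {K : NNReal}
    (hF : LipschitzWith K F) : LipschitzWith (max 1 (4 * K)) (field N F) :=
  LipschitzWith.prod_snd.prodMk (hF.monoatomicChain_force.comp LipschitzWith.prod_fst |>.weaken
    (by simp))

theorem extend_neg_reverse (p : Fin N → ℝ) {k : ℕ} (hk : k ≤ N + 1) :
    extend N (-reverse N p) k = -extend N p (N + 1 - k) := by
  unfold extend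
  split_ifs with h h' h'
  · simp only [reverse, ContinuousLinearMap.coe_pi', ContinuousLinearMap.proj_apply, Pi.neg_apply,
      neg_inj]
    congr 2
    ext
    simp only [Fin.val_rev]
    omega
  · omega
  · omega
  · simp

theorem force_neg_reverse (F : ℝ → ℝ) (p : Fin N → ℝ) :
    force N F (-reverse N p) = -reverse N (force N F p) := by
  ext i
  simp only [force, extend_neg_reverse p (by omega : (i : ℕ) + 2 ≤ N + 1),
    extend_neg_reverse p (by omega : (i : ℕ) + 1 ≤ N + 1),
    extend_neg_reverse p (by omega : (i : ℕ) ≤ N + 1)]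
  simp only [reverse, Pi.neg_apply, ContinuousLinearMap.pi_apply, ContinuousLinearMap.proj_apply,
    force, Fin.val_rev, show N - (i + 1) + 2 = N + 1 - i by omega,
    show N - (i + 1) + 1 = N - i by omega, show N + 1 - (i + 2) = N - (i + 1) by omega,
    show N + 1 - (i + 1) = N - i by omega]
  rw [neg_sub_neg, neg_sub_neg]
  ring

theorem field_inversion (F : ℝ → ℝ) (u : (Fin N → ℝ) × (Fin N → ℝ)) :
    field N F (inversion N u) = inversion N (field N F u) := by
  simp [field, inversion, force_neg_reverse]

theorem extend_state {x : ℕ → ℝ → ℝ} (hx0 : x 0 = 0) (hxN1 : x (N + 1) = 0) (t : ℝ) {k : ℕ}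
    (hk : k ≤ N + 1) : extend N (state N x t).1 k = x k t := by
  unfold extend state
  split_ifs with h
  · dsimp only
    rw [Nat.sub_add_cancel h.1]
  · obtain rfl | rfl : k = 0 ∨ k = N + 1 := by omega
    · simp [hx0]
    · simp [hxN1]

theorem hasDerivAt_state {F : ℝ → ℝ} {x : ℕ → ℝ → ℝ} (hx0 : x 0 = 0) (hxN1 : x (N + 1) = 0)
    (hdiff : ∀ n ≤ N + 1, Differentiable ℝ (x n))
    (hdiff2 : ∀ n ≤ N + 1, Differentiable ℝ (deriv (x n)))
    (hode : ∀ n, 1 ≤ n → n ≤ N → ∀ t : ℝ,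
      deriv (deriv (x n)) t = F (x (n + 1) t - x n t) - F (x n t - x (n - 1) t))
    (t : ℝ) : HasDerivAt (state N x) (field N F (state N x t)) t := by
  refine .prodMk (hasDerivAt_pi.2 fun i => ?_) (hasDerivAt_pi.2 fun i => ?_)
  · exact (hdiff (i + 1) (by omega) t).hasDerivAt
  · convert (hdiff2 (i + 1) (by omega) t).hasDerivAt using 1
    simp only [force, extend_state hx0 hxN1 t (by omega : (i : ℕ) + 2 ≤ N + 1),
      extend_state hx0 hxN1 t (by omega : (i : ℕ) + 1 ≤ N + 1),
      extend_state hx0 hxN1 t (by omega : (i : ℕ) ≤ N + 1), hode (i + 1) (by omega) (by omega) t]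
    rfl

theorem inversion_state_eq_self_iff (x : ℕ → ℝ → ℝ) (t : ℝ) :
    inversion N (state N x t) = state N x t ↔ ∀ n, 1 ≤ n → n ≤ N →
      x n t = -x (N + 1 - n) t ∧ deriv (x n) t = -deriv (x (N + 1 - n)) t := by
  simp only [inversion, reverse, state, neg_apply, ContinuousLinearMap.coe_prodMap',
    ContinuousLinearMap.coe_pi', ContinuousLinearMap.proj_apply, Prod.map_apply, Fin.val_rev,
    Prod.neg_mk, Prod.ext_iff, funext_iff, Pi.neg_apply]
  constructor
  · rintro ⟨hpos, hvel⟩ n hn hnN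
    have hpos := hpos ⟨n - 1, by omega⟩
    have hvel := hvel ⟨n - 1, by omega⟩
    rw [Nat.sub_add_cancel hn, show N - n + 1 = N + 1 - n by omega] at hpos hvel
    constructor <;> linarith
  · intro h
    constructor <;> intro i <;>
      simp only [show N - (i + 1) + 1 = N + 1 - (i + 1) by omega, h (i + 1) (by omega) (by omega)]

end MonoatomicChain

open MonoatomicChain in
theorem inversion_structure_is_conserved_general
    (N : ℕ) (F : ℝ → ℝ) (K : NNReal) (hF : LipschitzWith K F)
    (x : ℕ → ℝ → ℝ)
    (hx0 : x 0 = 0) (hxN1 : x (N + 1) = 0)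
    (hdiff : ∀ n ≤ N + 1, Differentiable ℝ (x n))
    (hdiff2 : ∀ n ≤ N + 1, Differentiable ℝ (deriv (x n)))
    (hode : ∀ n, 1 ≤ n → n ≤ N → ∀ t : ℝ,
      deriv (deriv (x n)) t = F (x (n + 1) t - x n t) - F (x n t - x (n - 1) t))
    (hinit : ∀ n, 1 ≤ n → n ≤ N → x n 0 = -x (N + 1 - n) 0)
    (hinit' : ∀ n, 1 ≤ n → n ≤ N → deriv (x n) 0 = -deriv (x (N + 1 - n)) 0) :
    ∀ n, 1 ≤ n → n ≤ N → ∀ t : ℝ, x n t = -x (N + 1 - n) t := by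
  have h₀ : inversion N (state N x 0) = state N x 0 :=
    (inversion_state_eq_self_iff x 0).2 fun n hn hnN => ⟨hinit n hn hnN, hinit' n hn hnN⟩
  intro n hn hnN t
  have h := ODE_solution_map_eq_self hF.monoatomicChain_field (inversion N) (field_inversion F)
    (hasDerivAt_state hx0 hxN1 hdiff hdiff2 hode) h₀ t
  exact ((inversion_state_eq_self_iff x t).1 h n hn hnN).1

/-- (Theorem 2, first part.) For a monoatomic chain with `N` mobile atoms, fixed ends
and a Lipschitz nearest-neighbor force function, initial data with inversion structure
(`x_n(0) = −x_{N+1−n}(0)`, `x_n'(0) = −x_{N+1−n}'(0)`) keep the inversion structure for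
all time: any inversion mode exists forever without transferring excitation to
permutation modes. -/
theorem inversion_structure_is_conserved
    (N : ℕ) (hN : 1 ≤ N) (F : ℝ → ℝ) (K : NNReal) (hF : LipschitzWith K F)
    (x : ℕ → ℝ → ℝ)
    (hx0 : x 0 = 0) (hxN1 : x (N + 1) = 0)
    (hdiff : ∀ n ≤ N + 1, Differentiable ℝ (x n))
    (hdiff2 : ∀ n ≤ N + 1, Differentiable ℝ (deriv (x n)))
    (hode : ∀ n, 1 ≤ n → n ≤ N → ∀ t : ℝ,
      deriv (deriv (x n)) t = F (x (n + 1) t - x n t) - F (x n t - x (n - 1) t))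
    (hinit : ∀ n, 1 ≤ n → n ≤ N → x n 0 = -x (N + 1 - n) 0)
    (hinit' : ∀ n, 1 ≤ n → n ≤ N → deriv (x n) 0 = -deriv (x (N + 1 - n)) 0) :
    ∀ n, 1 ≤ n → n ≤ N → ∀ t : ℝ, x n t = -x (N + 1 - n) t :=
  inversion_structure_is_conserved_general N F K hF x hx0 hxN1 hdiff hdiff2 hode hinit hinit'
end

section
/- (Theorem 1, first part.) Consider the chain with two mobile atoms and fixed ends with a Lipschitz force function F : ℝ → ℝ: twice differentiable functions x_1, x_2 : ℝ → ℝ satisfying x_1''(t) = F(x_2(t) − x_1(t)) − F(x_1(t)) and x_2''(t) = F(−x_2(t)) − F(x_2(t) − x_1(t)) for all t. If the antisymmetric mode is excited at t = 0, i.e., x_1(0) = a, x_2(0) = −a for some a ∈ ℝ and x_1'(0) = x_2'(0) = 0, then x_2(t) = −x_1(t) for all t ∈ ℝ; consequently the symmetric-mode amplitude x_1(t) + x_2(t) is identically zero, i.e., the excitation (energy) never transfers from the antisymmetric mode to the symmetric mode, for arbitrarily large amplitude a. -/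
open Real

/-!
The equations of motion are equivariant under the reflection of the chain that exchanges the two
atoms and reverses all displacements, `(x₁, x₂) ↦ (-x₂, -x₁)`. The antisymmetric initial state is
fixed by this reflection, so the reflected trajectory solves the same initial value problem, and
uniqueness of solutions (the force is Lipschitz) forces it to coincide with the trajectory itself.
-/

section Equivariance

variable {E : Type*} [NormedAddCommGroup E] [NormedSpace ℝ E]

theorem ODE_solution_map_eq_of_equivariant {v : E → E} {K : NNReal} (hv : LipschitzWith K v)
    (σ : E →L[ℝ] E) (hσ : ∀ p, v (σ p) = σ (v p)) {f : ℝ → E}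
    (hf : ∀ t, HasDerivAt f (v (f t)) t) {t₀ : ℝ} (h₀ : σ (f t₀) = f t₀) :
    σ ∘ f = f :=
  ODE_solution_unique_univ (v := fun _ => v) (s := fun _ => Set.univ)
    (fun _ => hv.lipschitzOnWith)
    (fun t => ⟨by simpa only [Function.comp_apply, hσ] using σ.hasFDerivAt.comp_hasDerivAt t (hf t), trivial⟩)
    (fun t => ⟨hf t, trivial⟩) h₀

end Equivariance

namespace TwoAtomChain

/-- The phase-space vector field of the chain, on states `(x₁, x₂, x₁', x₂')`. -/
def field (F : ℝ → ℝ) (p : ℝ × ℝ × ℝ × ℝ) : ℝ × ℝ × ℝ × ℝ :=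
  (p.2.2.1, p.2.2.2, F (p.2.1 - p.1) - F p.1, F (-p.2.1) - F (p.2.1 - p.1))

noncomputable def reflection : (ℝ × ℝ × ℝ × ℝ) →L[ℝ] ℝ × ℝ × ℝ × ℝ :=
  LinearMap.toContinuousLinearMap
    { toFun := fun p => (-p.2.1, -p.1, -p.2.2.2, -p.2.2.1)
      map_add' := fun p q => by simp only [Prod.fst_add, Prod.snd_add, neg_add, Prod.mk_add_mk]
      map_smul' := fun c p => by simp }

@[simp]
theorem reflection_apply (p : ℝ × ℝ × ℝ × ℝ) :
    reflection p = (-p.2.1, -p.1, -p.2.2.2, -p.2.2.1) :=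
  rfl

theorem field_reflection (F : ℝ → ℝ) (p : ℝ × ℝ × ℝ × ℝ) :
    field F (reflection p) = reflection (field F p) := by
  simp only [field, reflection_apply, neg_neg, neg_sub, Prod.mk.injEq, true_and]
  constructor <;> ring_nf

theorem exists_lipschitzWith_field {F : ℝ → ℝ} {K : NNReal} (hF : LipschitzWith K F) :
    ∃ K', LipschitzWith K' (field F) := by
  have hx₁ : LipschitzWith 1 (fun p : ℝ × ℝ × ℝ × ℝ => p.1) := LipschitzWith.prod_fst
  have hx₂ : LipschitzWith (1 * 1) (fun p : ℝ × ℝ × ℝ × ℝ => p.2.1) :=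
    LipschitzWith.prod_fst.comp LipschitzWith.prod_snd
  have hv₁ : LipschitzWith (1 * 1 * 1) (fun p : ℝ × ℝ × ℝ × ℝ => p.2.2.1) :=
    (LipschitzWith.prod_fst.comp LipschitzWith.prod_snd).comp LipschitzWith.prod_snd
  have hv₂ : LipschitzWith (1 * 1 * 1) (fun p : ℝ × ℝ × ℝ × ℝ => p.2.2.2) :=
    (LipschitzWith.prod_snd.comp LipschitzWith.prod_snd).comp LipschitzWith.prod_snd
  exact ⟨_, hv₁.prodMk <| hv₂.prodMk <|
    ((hF.comp (hx₂.sub hx₁)).sub (hF.comp hx₁)).prodMk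
      ((hF.comp hx₂.neg).sub (hF.comp (hx₂.sub hx₁)))⟩

theorem hasDerivAt_state {F : ℝ → ℝ} {x₁ x₂ : ℝ → ℝ}
    (h1 : Differentiable ℝ x₁) (h1' : Differentiable ℝ (deriv x₁))
    (h2 : Differentiable ℝ x₂) (h2' : Differentiable ℝ (deriv x₂))
    (hode1 : ∀ t, deriv (deriv x₁) t = F (x₂ t - x₁ t) - F (x₁ t))
    (hode2 : ∀ t, deriv (deriv x₂) t = F (-x₂ t) - F (x₂ t - x₁ t)) (t : ℝ) :
    HasDerivAt (fun t => (x₁ t, x₂ t, deriv x₁ t, deriv x₂ t))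
      (field F (x₁ t, x₂ t, deriv x₁ t, deriv x₂ t)) t := by
  have h := (h1 t).hasDerivAt.prodMk <| (h2 t).hasDerivAt.prodMk <|
    (h1' t).hasDerivAt.prodMk (h2' t).hasDerivAt
  rwa [hode1, hode2] at h

end TwoAtomChain

open TwoAtomChain in
/-- (Theorem 1, first part.) In the chain with two mobile atoms, fixed ends and a
Lipschitz force function, exciting the antisymmetric mode `[a, −a]` (zero initial
velocities) keeps the motion antisymmetric forever: `x₂ = −x₁`, so the
symmetric-mode amplitude `x₁ + x₂` is identically zero, for arbitrarily large `a`. -/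
theorem antisymmetric_mode_never_excites_symmetric_mode
    (F : ℝ → ℝ) (K : NNReal) (hF : LipschitzWith K F)
    (x₁ x₂ : ℝ → ℝ) (a : ℝ)
    (h1 : Differentiable ℝ x₁) (h1' : Differentiable ℝ (deriv x₁))
    (h2 : Differentiable ℝ x₂) (h2' : Differentiable ℝ (deriv x₂))
    (hode1 : ∀ t : ℝ, deriv (deriv x₁) t = F (x₂ t - x₁ t) - F (x₁ t))
    (hode2 : ∀ t : ℝ, deriv (deriv x₂) t = F (-x₂ t) - F (x₂ t - x₁ t))
    (hinit1 : x₁ 0 = a) (hinit2 : x₂ 0 = -a)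
    (hv1 : deriv x₁ 0 = 0) (hv2 : deriv x₂ 0 = 0) :
    ∀ t : ℝ, x₂ t = -x₁ t ∧ x₁ t + x₂ t = 0 := by
  obtain ⟨K', hfield⟩ := exists_lipschitzWith_field hF
  have hinvariant := ODE_solution_map_eq_of_equivariant hfield reflection (field_reflection F)
    (hasDerivAt_state h1 h1' h2 h2' hode1 hode2) (t₀ := 0)
    (by simp [hinit1, hinit2, hv1, hv2])
  intro t
  have hx₁ : -x₂ t = x₁ t := congrArg Prod.fst (congrFun hinvariant t)
  constructor <;> linarith
end

section
/- (Theorem 1, second part, for the FPU-α chain.) Let α ≠ 0 and F(u) = −u + αu². Let x_1, x_2 : ℝ → ℝ be twice differentiable and satisfy x_1''(t) = F(x_2(t) − x_1(t)) − F(x_1(t)) and x_2''(t) = F(−x_2(t)) − F(x_2(t) − x_1(t)) for all t, with symmetric initial data x_1(0) = x_2(0) = a ≠ 0 and x_1'(0) = x_2'(0) = 0. Then (x_1 − x_2)''(0) = −2αa² ≠ 0, and consequently for every ε > 0 there exists t with 0 < |t| < ε and x_1(t) ≠ x_2(t): the excitation transfer from the symmetric mode to the antisymmetric mode occurs already at arbitrarily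 small times. -/
/-!
At the symmetric configuration `x₁ = x₂ = a` the equations of motion give the relative
acceleration `(x₁ - x₂)'' = 2 F(0) - F(a) - F(-a)`, a second difference of `F` that sees only its
even part; for FPU-α this is `-2αa²`. A function with nonzero second derivative at a point cannot
be constant on a punctured neighbourhood of it, so `x₁ - x₂` leaves `0` at arbitrarily small times.
-/

open Filter Topology

section

variable {𝕜 E : Type*} [NontriviallyNormedField 𝕜] [NormedAddCommGroup E] [NormedSpace 𝕜 E]
  {f g : 𝕜 → E} {x : 𝕜}

theorem deriv_deriv_sub (hf : Differentiable 𝕜 f) (hg : Differentiable 𝕜 g)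
    (hf' : DifferentiableAt 𝕜 (deriv f) x) (hg' : DifferentiableAt 𝕜 (deriv g) x) :
    deriv (deriv fun t => f t - g t) x = deriv (deriv f) x - deriv (deriv g) x := by
  have hderiv : deriv (fun t => f t - g t) = fun t => deriv f t - deriv g t :=
    funext fun t => deriv_sub (hf t) (hg t)
  rw [hderiv, deriv_fun_sub hf' hg']

theorem frequently_ne_of_deriv_deriv_ne_zero (h : deriv (deriv f) x ≠ 0) :
    ∃ᶠ t in 𝓝[≠] x, f t ≠ f x := by
  contrapose! h
  have hconst : f =ᶠ[𝓝 x] fun _ => f x := by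
    rw [← nhdsNE_sup_pure, EventuallyEq, eventually_sup]
    exact ⟨h, rfl⟩
  rw [hconst.deriv.deriv_eq]
  simp

end

theorem symmetric_mode_excites_antisymmetric_mode_FPU_alpha_general
    (α : ℝ) (hα : α ≠ 0) (a : ℝ) (ha : a ≠ 0)
    (F : ℝ → ℝ) (hF : ∀ u : ℝ, F u = -u + α * u ^ 2)
    (x₁ x₂ : ℝ → ℝ)
    (h1 : Differentiable ℝ x₁) (h1' : Differentiable ℝ (deriv x₁))
    (h2 : Differentiable ℝ x₂) (h2' : Differentiable ℝ (deriv x₂))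
    (hode1 : ∀ t : ℝ, deriv (deriv x₁) t = F (x₂ t - x₁ t) - F (x₁ t))
    (hode2 : ∀ t : ℝ, deriv (deriv x₂) t = F (-x₂ t) - F (x₂ t - x₁ t))
    (hinit1 : x₁ 0 = a) (hinit2 : x₂ 0 = a) :
    deriv (deriv (fun t => x₁ t - x₂ t)) 0 = -2 * α * a ^ 2 ∧
    (-2 * α * a ^ 2 ≠ 0) ∧
    ∀ ε : ℝ, 0 < ε → ∃ t : ℝ, 0 < |t| ∧ |t| < ε ∧ x₁ t ≠ x₂ t := by
  have haccel : deriv (deriv (fun t => x₁ t - x₂ t)) 0 = -2 * α * a ^ 2 := by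
    rw [deriv_deriv_sub h1 h2 (h1' 0) (h2' 0), hode1, hode2, hinit1, hinit2, hF, hF, hF]
    ring
  have hne : -2 * α * a ^ 2 ≠ 0 := by simp [hα, ha]
  refine ⟨haccel, hne, fun ε hε => ?_⟩
  have hfreq := frequently_ne_of_deriv_deriv_ne_zero (haccel ▸ hne)
  obtain ⟨t, ht, ht0, hball⟩ :=
    (hfreq.and_eventually (inter_mem_nhdsWithin _ (Metric.ball_mem_nhds 0 hε))).exists
  refine ⟨t, abs_pos.mpr ht0, by simpa using hball, fun heq => ht ?_⟩
  simp [heq, hinit1, hinit2]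

/-- (Theorem 1, second part, FPU-α chain.) Exciting the symmetric mode `[a, a]` of the
chain with two mobile atoms and force `F(u) = −u + αu²` gives
`(x₁ − x₂)''(0) = −2αa² ≠ 0`, so the excitation transfers to the antisymmetric mode
at arbitrarily small times. -/
theorem symmetric_mode_excites_antisymmetric_mode_FPU_alpha
    (α : ℝ) (hα : α ≠ 0) (a : ℝ) (ha : a ≠ 0)
    (F : ℝ → ℝ) (hF : ∀ u : ℝ, F u = -u + α * u ^ 2)
    (x₁ x₂ : ℝ → ℝ)
    (h1 : Differentiable ℝ x₁) (h1' : Differentiable ℝ (deriv x₁))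
    (h2 : Differentiable ℝ x₂) (h2' : Differentiable ℝ (deriv x₂))
    (hode1 : ∀ t : ℝ, deriv (deriv x₁) t = F (x₂ t - x₁ t) - F (x₁ t))
    (hode2 : ∀ t : ℝ, deriv (deriv x₂) t = F (-x₂ t) - F (x₂ t - x₁ t))
    (hinit1 : x₁ 0 = a) (hinit2 : x₂ 0 = a)
    (hv1 : deriv x₁ 0 = 0) (hv2 : deriv x₂ 0 = 0) :
    deriv (deriv (fun t => x₁ t - x₂ t)) 0 = -2 * α * a ^ 2 ∧
    (-2 * α * a ^ 2 ≠ 0) ∧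
    ∀ ε : ℝ, 0 < ε → ∃ t : ℝ, 0 < |t| ∧ |t| < ε ∧ x₁ t ≠ x₂ t :=
  symmetric_mode_excites_antisymmetric_mode_FPU_alpha_general α hα a ha F hF x₁ x₂ h1 h1' h2 h2'
    hode1 hode2 hinit1 hinit2
end

section
/- (Inversion symmetry conservation in a cyclic chain.) Let M ≥ 1, let F : ℝ → ℝ be Lipschitz, and let y : ℝ → (ℤ/Mℤ → ℝ) be a solution of the cyclic chain of M particles: each y_j twice differentiable with y_j''(t) = F(y_{j+1}(t) − y_j(t)) − F(y_j(t) − y_{j−1}(t)) for all j ∈ ℤ/Mℤ and all t. Fix c ∈ ℤ/Mℤ and suppose the initial data possess inversion structure centered at c: y_j(0) = −y_{2c−j}(0) and y_j'(0) = −y_{2c−j}'(0) for all j ∈ ℤ/Mℤ. Then y_j(t) = −y_{2c−j}(t) for all j ∈ ℤ/Mℤ and all t ∈ ℝ. -/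
/-!
The reflection `u ↦ (j ↦ -u (2c - j))` of configurations commutes with the chain force,
because it exchanges the bonds on the two sides of a particle and reverses their sign.
Hence the reflected trajectory solves the same second-order system, with the same initial
position and velocity by hypothesis. The force is globally Lipschitz on the finite-dimensional
configuration space, so the solution is unique and equals its reflection.
-/

theorem ODE_solution_unique_univ_of_secondOrder {E : Type*} [NormedAddCommGroup E]
    [NormedSpace ℝ E] {G : E → E} {K : NNReal} (hG : LipschitzWith K G) {u u' w w' : ℝ → E}
    (hu : ∀ t, HasDerivAt u (u' t) t) (hu' : ∀ t, HasDerivAt u' (G (u t)) t)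
    (hw : ∀ t, HasDerivAt w (w' t) t) (hw' : ∀ t, HasDerivAt w' (G (w t)) t)
    {t₀ : ℝ} (h₀ : u t₀ = w t₀) (h₀' : u' t₀ = w' t₀) : u = w := by
  have hV : LipschitzWith (max 1 K) fun p : E × E => (p.2, G p.1) := by
    simpa using LipschitzWith.prod_snd.prodMk (hG.comp LipschitzWith.prod_fst)
  have hphase := ODE_solution_unique_univ (v := fun _ (p : E × E) => (p.2, G p.1))
    (s := fun _ => Set.univ) (f := fun t => (u t, u' t)) (g := fun t => (w t, w' t))
    (fun _ => hV.lipschitzOnWith) (fun t => ⟨(hu t).prodMk (hu' t), trivial⟩)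
    (fun t => ⟨(hw t).prodMk (hw' t), trivial⟩) (Prod.ext h₀ h₀')
  exact funext fun t => congrArg Prod.fst (congrFun hphase t)

namespace CyclicChain

variable {M : ℕ}

def force (F : ℝ → ℝ) (u : ZMod M → ℝ) : ZMod M → ℝ :=
  fun j => F (u (j + 1) - u j) - F (u j - u (j - 1))

def reflect (c : ZMod M) (u : ZMod M → ℝ) : ZMod M → ℝ :=
  fun j => -u (2 * c - j)

theorem force_reflect (F : ℝ → ℝ) (c : ZMod M) (u : ZMod M → ℝ) :
    force F (reflect c u) = reflect c (force F u) := by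
  funext j
  have hleft : 2 * c - (j + 1) = 2 * c - j - 1 := by ring
  have hright : 2 * c - (j - 1) = 2 * c - j + 1 := by ring
  simp only [force, reflect, hleft, hright]
  ring_nf

theorem HasDerivAt.reflect {u : ℝ → ZMod M → ℝ} {u' : ZMod M → ℝ} {t : ℝ} (c : ZMod M)
    (hu : HasDerivAt u u' t) : HasDerivAt (fun s => reflect c (u s)) (reflect c u') t :=
  hasDerivAt_pi.2 fun j => (hasDerivAt_pi.1 hu (2 * c - j)).neg

theorem lipschitzWith_force [NeZero M] {F : ℝ → ℝ} {K : NNReal} (hF : LipschitzWith K F) :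
    LipschitzWith (4 * K) (force (M := M) F) := by
  have hbond (i j : ZMod M) :
      LipschitzWith (2 * K) fun u : ZMod M → ℝ => F (u i - u j) := by
    have h := hF.comp ((LipschitzWith.eval (α := fun _ => ℝ) i).sub (LipschitzWith.eval j))
    rwa [one_add_one_eq_two, mul_comm] at h
  refine fun u v => edist_pi_le_iff.2 fun j => ?_
  have := ((hbond (j + 1) j).sub (hbond j (j - 1))) u v
  rwa [← two_mul, ← mul_assoc, show (2 * 2 : NNReal) = 4 by norm_num] at this

end CyclicChain

open CyclicChain in
/-- (Inversion symmetry conservation in a cyclic chain.) For a cyclic chain of `M`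
particles with a Lipschitz force function, initial data with inversion structure
centered at `c` (`y_j(0) = −y_{2c−j}(0)`, `y_j'(0) = −y_{2c−j}'(0)`) keep the
inversion structure for all time. -/
theorem cyclic_chain_inversion_symmetry_conserved
    (M : ℕ) (hM : 1 ≤ M) (F : ℝ → ℝ) (K : NNReal) (hF : LipschitzWith K F)
    (y : ZMod M → ℝ → ℝ)
    (hdiff : ∀ j : ZMod M, Differentiable ℝ (y j))
    (hdiff2 : ∀ j : ZMod M, Differentiable ℝ (deriv (y j)))
    (hode : ∀ j : ZMod M, ∀ t : ℝ,
      deriv (deriv (y j)) t = F (y (j + 1) t - y j t) - F (y j t - y (j - 1) t))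
    (c : ZMod M)
    (hinit : ∀ j : ZMod M, y j 0 = -y (2 * c - j) 0)
    (hinit' : ∀ j : ZMod M, deriv (y j) 0 = -deriv (y (2 * c - j)) 0) :
    ∀ j : ZMod M, ∀ t : ℝ, y j t = -y (2 * c - j) t := by
  have : NeZero M := ⟨by omega⟩
  set u : ℝ → ZMod M → ℝ := fun t j => y j t
  set u' : ℝ → ZMod M → ℝ := fun t j => deriv (y j) t
  have hu (t : ℝ) : HasDerivAt u (u' t) t := hasDerivAt_pi.2 fun j => (hdiff j t).hasDerivAt
  have hu' (t : ℝ) : HasDerivAt u' (force F (u t)) t := by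
    refine hasDerivAt_pi.2 fun j => ?_
    have h := (hdiff2 j t).hasDerivAt
    rwa [hode] at h
  have hw' (t : ℝ) : HasDerivAt (fun s => reflect c (u' s)) (force F (reflect c (u t))) t := by
    simpa only [force_reflect] using (hu' t).reflect c
  have hsymm := ODE_solution_unique_univ_of_secondOrder (lipschitzWith_force hF) hu hu'
    (fun t => (hu t).reflect c) hw' (funext hinit) (funext hinit')
  exact fun j t => congrFun (congrFun hsymm t) j
end

section
/- (Translational symmetry conservation in a cyclic chain.) Let M ≥ 1, let F : ℝ → ℝ be Lipschitz, and let y : ℝ → (ℤ/Mℤ → ℝ) be a solution of the cyclic chain of M particles: each y_j twice differentiable with y_j''(t) = F(y_{j+1}(t) − y_j(t)) − F(y_j(t) − y_{j−1}(t)) for all j ∈ ℤ/Mℤ and all t. Fix d ∈ ℤ/Mℤ and suppose the initial data are invariant under translation by d: y_j(0) = y_{j+d}(0) and y_j'(0) = y_{j+d}'(0) for all j ∈ ℤ/Mℤ. Then y_j(t) = y_{j+d}(t) for all j ∈ ℤ/Mℤ and all t ∈ ℝ. -/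
open Real

/-!
The phase curve `t ↦ (y t, y' t)` of a chain solves a first-order autonomous ODE whose vector
field is Lipschitz when `F` is. Relabelling the particles by `j ↦ j + d` commutes with the
equations of motion, so the translated chain is again a solution, with the same initial phase
point by hypothesis; uniqueness of solutions of Lipschitz ODEs makes the two coincide.
-/

theorem LipschitzWith.of_forall_apply {α ι : Type*} {β : ι → Type*} [PseudoEMetricSpace α]
    [∀ i, PseudoEMetricSpace (β i)] [Fintype ι] {K : NNReal} {f : α → ∀ i, β i}
    (hf : ∀ i, LipschitzWith K fun x => f x i) : LipschitzWith K f :=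
  fun x y => edist_pi_le_iff.2 fun i => hf i x y

section CyclicChain

variable {ι : Type*} [AddCommGroup ι] [One ι] {F : ℝ → ℝ}

def chainForce (F : ℝ → ℝ) (x : ι → ℝ) (j : ι) : ℝ :=
  F (x (j + 1) - x j) - F (x j - x (j - 1))

def chainField (F : ℝ → ℝ) (u : (ι → ℝ) × (ι → ℝ)) : (ι → ℝ) × (ι → ℝ) :=
  (u.2, chainForce F u.1)

noncomputable def phaseCurve (y : ι → ℝ → ℝ) (t : ℝ) : (ι → ℝ) × (ι → ℝ) :=
  (fun j => y j t, fun j => deriv (y j) t)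

structure IsChainSolution (F : ℝ → ℝ) (y : ι → ℝ → ℝ) : Prop where
  differentiable : ∀ j, Differentiable ℝ (y j)
  differentiable_deriv : ∀ j, Differentiable ℝ (deriv (y j))
  deriv_deriv : ∀ j t, deriv (deriv (y j)) t = chainForce F (fun i => y i t) j

theorem lipschitzWith_chainForce_apply [Fintype ι] {K : NNReal} (hF : LipschitzWith K F)
    (j : ι) : LipschitzWith (4 * K) fun x : ι → ℝ => chainForce F x j := by
  have hbond (a b : ι) : LipschitzWith (2 * K) fun x : ι → ℝ => F (x a - x b) := by
    have h := hF.comp ((LipschitzWith.eval (α := fun _ : ι => ℝ) a).sub (LipschitzWith.eval b))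
    rwa [one_add_one_eq_two, mul_comm] at h
  have h := (hbond (j + 1) j).sub (hbond j (j - 1))
  rwa [← two_mul, ← mul_assoc, show (2 : NNReal) * 2 = 4 by norm_num] at h

theorem lipschitzWith_chainField [Fintype ι] {K : NNReal} (hF : LipschitzWith K F) :
    LipschitzWith (max 1 (4 * K)) (chainField (ι := ι) F) := by
  have h := (LipschitzWith.prod_snd (α := ι → ℝ) (β := ι → ℝ)).prodMk <|
    LipschitzWith.of_forall_apply fun j =>
      (lipschitzWith_chainForce_apply hF j).comp LipschitzWith.prod_fst
  rwa [mul_one] at h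

namespace IsChainSolution

variable {y : ι → ℝ → ℝ}

theorem comp_add_right (hy : IsChainSolution F y) (d : ι) :
    IsChainSolution F fun j => y (j + d) where
  differentiable j := hy.differentiable (j + d)
  differentiable_deriv j := hy.differentiable_deriv (j + d)
  deriv_deriv j t := by
    simp only [hy.deriv_deriv, chainForce, add_right_comm j d 1, sub_add_eq_add_sub j 1 d]

theorem hasDerivAt_phaseCurve [Fintype ι] (hy : IsChainSolution F y) (t : ℝ) :
    HasDerivAt (phaseCurve y) (chainField F (phaseCurve y t)) t := by
  refine HasDerivAt.prodMk (hasDerivAt_pi.2 fun j => ?_) (hasDerivAt_pi.2 fun j => ?_)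
  · exact (hy.differentiable j t).hasDerivAt
  · have h := (hy.differentiable_deriv j t).hasDerivAt
    rwa [hy.deriv_deriv] at h

theorem eq_of_phaseCurve_eq [Fintype ι] {K : NNReal} (hF : LipschitzWith K F)
    {z : ι → ℝ → ℝ} (hy : IsChainSolution F y) (hz : IsChainSolution F z) {t₀ : ℝ}
    (h₀ : phaseCurve y t₀ = phaseCurve z t₀) : y = z := by
  have hphase : phaseCurve y = phaseCurve z :=
    ODE_solution_unique_univ (v := fun _ => chainField F) (s := fun _ => Set.univ)
      (fun _ => (lipschitzWith_chainField hF).lipschitzOnWith)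
      (fun t => ⟨hy.hasDerivAt_phaseCurve t, trivial⟩)
      (fun t => ⟨hz.hasDerivAt_phaseCurve t, trivial⟩) h₀
  funext j t
  exact congrArg (·.1 j) (congrFun hphase t)

end IsChainSolution

end CyclicChain

/-- (Translational symmetry conservation in a cyclic chain.) For a cyclic chain of `M`
particles with a Lipschitz force function, initial data invariant under translation
by `d` (`y_j(0) = y_{j+d}(0)`, `y_j'(0) = y_{j+d}'(0)`) stay invariant under this
translation for all time. -/
theorem cyclic_chain_translational_symmetry_conserved
    (M : ℕ) (hM : 1 ≤ M) (F : ℝ → ℝ) (K : NNReal) (hF : LipschitzWith K F)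
    (y : ZMod M → ℝ → ℝ)
    (hdiff : ∀ j : ZMod M, Differentiable ℝ (y j))
    (hdiff2 : ∀ j : ZMod M, Differentiable ℝ (deriv (y j)))
    (hode : ∀ j : ZMod M, ∀ t : ℝ,
      deriv (deriv (y j)) t = F (y (j + 1) t - y j t) - F (y j t - y (j - 1) t))
    (d : ZMod M)
    (hinit : ∀ j : ZMod M, y j 0 = y (j + d) 0)
    (hinit' : ∀ j : ZMod M, deriv (y j) 0 = deriv (y (j + d)) 0) :
    ∀ j : ZMod M, ∀ t : ℝ, y j t = y (j + d) t := by
  have : NeZero M := ⟨by omega⟩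
  have hy : IsChainSolution F y := ⟨hdiff, hdiff2, hode⟩
  have h₀ : phaseCurve y 0 = phaseCurve (fun j => y (j + d)) 0 :=
    Prod.ext (funext hinit) (funext hinit')
  have hsym := hy.eq_of_phaseCurve_eq hF (hy.comp_add_right d) h₀
  exact fun j t => congrFun (congrFun hsym j) t
end
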